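/- arXiv:2210.03449 — 10 statements merged into one kernel-verified Lean document; each statement's English description precedes it below -/
import Mathlib

section
/- Let d, K be positive natural numbers and let A : Fin K → Matrix (Fin d) (Fin d) ℂ be a linearly independent family of matrices satisfying the trace-preserving condition ∑_k (A k)ᴴ * (A k) = 1. Let Φ : Matrix (Fin d) (Fin d) ℂ →ₗ[ℂ] Matrix (Fin d) (Fin d) ℂ be the map ρ ↦ ∑_k (A k) * ρ * (A k)ᴴ. Then Φ is an extreme point (with respect to the real scalar structure) of the set of completely positive trace-preserving linear maps on Matrix (Fin d) (Fin d) ℂ if and only if the family (fun p : Fin K × Fin K => (A p.1)ᴴ * (A p.2)) is linearly independent over ℂ. -/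
/-!
Let `V` be the matrix whose columns are the Kraus operators `A k`, read as vectors indexed by
`n × n`. The map `krausMap A c : ρ ↦ ∑ c i j • A i * ρ * (A j)ᴴ` has Choi matrix `V * c * Vᴴ` and is
trace preserving iff `gramMap A c = ∑ c i j • (A j)ᴴ * A i` equals `1`; as `V` has a left inverse,
`c` is determined by the map.

If `Φ = krausMap A 1` is a proper convex combination of channels `Ψ₁`, `Ψ₂`, the Choi matrix of
`Ψ₁` is dominated by `V * Vᴴ`, hence vanishes on the kernel of `Vᴴ` and has the form `V * c * Vᴴ`.
So `Ψ₁ = krausMap A c` with `gramMap A c = 1 = gramMap A 1`, and `c = 1` when `gramMap A` is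
injective, i.e. when the `(A i)ᴴ * A j` are independent. Conversely, a nonzero relation among them
can be taken Hermitian, `e`, and then `Φ` is the midpoint of the distinct channels
`krausMap A (1 ± ε • e)`, whose coefficient matrices are positive for small `ε`.
-/

open Matrix Function
open scoped ComplexOrder ComplexStarModule

lemma IsSelfAdjoint.one_sub_nonneg {A : Type*} [CStarAlgebra A] [PartialOrder A]
    [StarOrderedRing A] {a : A} (ha : IsSelfAdjoint a) (h : ‖a‖ ≤ 1) : 0 ≤ 1 - a := by
  simpa using ha.le_algebraMap_norm_self.trans (algebraMap_mono A h)

namespace Matrix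

variable {m n k 𝕜 : Type*} [RCLike 𝕜] [Fintype n]

theorem mul_single_mul_apply {α : Type*} [Semiring α] [DecidableEq n] (X : Matrix m n α)
    (Y : Matrix n k α) (a : m) (a' : k) (b b' : n) (r : α) :
    (X * single b b' r * Y) a a' = X a b * r * Y b' a' := by
  simp [mul_apply, single, ite_and]

variable [Fintype m] [Fintype k]

theorem PosSemidef.mulVec_eq_zero_of_add_mulVec_eq_zero {A B : Matrix n n 𝕜}
    (hA : A.PosSemidef) (hB : B.PosSemidef) {x : n → 𝕜} (h : (A + B) *ᵥ x = 0) :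
    A *ᵥ x = 0 := by
  have hsum : star x ⬝ᵥ A *ᵥ x + star x ⬝ᵥ B *ᵥ x = 0 := by
    rw [← dotProduct_add, ← add_mulVec, h, dotProduct_zero]
  refine (hA.dotProduct_mulVec_zero_iff x).1 ?_
  exact ((add_eq_zero_iff_of_nonneg (hA.dotProduct_mulVec_nonneg x)
    (hB.dotProduct_mulVec_nonneg x)).1 hsum).1

theorem exists_mul_eq_one_of_mulVec_injective [DecidableEq k] {M : Matrix m k 𝕜}
    (hM : Injective M.mulVec) : ∃ W : Matrix k m 𝕜, W * M = 1 := by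
  have hgram : IsUnit (Mᴴ * M) := by
    refine mulVec_injective_iff_isUnit.1 fun x y hxy => hM ?_
    rw [← sub_eq_zero, ← mulVec_sub] at hxy ⊢
    exact (conjTranspose_mul_self_mulVec_eq_zero M _).1 hxy
  exact ⟨(Mᴴ * M)⁻¹ * Mᴴ, by
    rw [Matrix.mul_assoc, nonsing_inv_mul _ ((isUnit_iff_isUnit_det _).1 hgram)]⟩

theorem eq_mul_mul_conjTranspose_of_ker_le [DecidableEq m] [DecidableEq k] {M : Matrix m k 𝕜}
    {W : Matrix k m 𝕜} (hW : W * M = 1) {N : Matrix m m 𝕜} (hN : N.IsHermitian)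
    (hker : ∀ x, Mᴴ *ᵥ x = 0 → N *ᵥ x = 0) : N = M * (W * N * Wᴴ) * Mᴴ := by
  have hright : N = N * (Wᴴ * Mᴴ) := by
    have h0 : N * (1 - Wᴴ * Mᴴ) = 0 := by
      refine ext_iff_mulVec.2 fun v => ?_
      rw [← mulVec_mulVec, zero_mulVec]
      refine hker _ ?_
      rw [mulVec_mulVec, Matrix.mul_sub, Matrix.mul_one, ← Matrix.mul_assoc,
        ← conjTranspose_mul, hW, conjTranspose_one, Matrix.one_mul, sub_self, zero_mulVec]
    rwa [Matrix.mul_sub, Matrix.mul_one, sub_eq_zero] at h0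
  have hleft : N = M * W * N := by
    simpa only [conjTranspose_mul, conjTranspose_conjTranspose, hN.eq, Matrix.mul_assoc]
      using congrArg conjTranspose hright
  calc N = M * W * N := hleft
    _ = M * W * (N * (Wᴴ * Mᴴ)) := by rw [← hright]
    _ = M * (W * N * Wᴴ) * Mᴴ := by simp only [Matrix.mul_assoc]

theorem mul_mul_conjTranspose_left_injective [DecidableEq k] {M : Matrix m k 𝕜}
    {W : Matrix k m 𝕜} (hW : W * M = 1) : Injective fun c : Matrix k k 𝕜 => M * c * Mᴴ := by
  have hcancel (c : Matrix k k 𝕜) : W * (M * c * Mᴴ) * Wᴴ = c := by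
    rw [show W * (M * c * Mᴴ) * Wᴴ = W * M * c * (W * M)ᴴ by
      simp only [conjTranspose_mul, Matrix.mul_assoc], hW, conjTranspose_one,
      Matrix.one_mul, Matrix.mul_one]
  intro c c' h
  rw [← hcancel c, ← hcancel c']
  exact congrArg (fun X => W * X * Wᴴ) h

open scoped Matrix.Norms.L2Operator MatrixOrder in
theorem IsHermitian.exists_posSemidef_one_add_smul [DecidableEq n] {c : Matrix n n ℂ}
    (hc : c.IsHermitian) : ∃ ε : ℝ, 0 < ε ∧ ∀ t : ℝ, |t| ≤ ε → (1 + (t : ℂ) • c).PosSemidef := by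
  refine ⟨(‖c‖ + 1)⁻¹, by positivity, fun t ht => ?_⟩
  have hnorm : ‖-((t : ℂ) • c)‖ ≤ 1 := by
    rw [norm_neg, norm_smul, Complex.norm_real, Real.norm_eq_abs]
    calc |t| * ‖c‖ ≤ (‖c‖ + 1)⁻¹ * (‖c‖ + 1) := by gcongr; linarith
      _ = 1 := inv_mul_cancel₀ (by positivity)
  have hsa : IsSelfAdjoint (-((t : ℂ) • c)) :=
    (IsSelfAdjoint.smul (Complex.conj_ofReal t) hc.isSelfAdjoint).neg
  rw [← nonneg_iff_posSemidef, ← sub_neg_eq_add]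
  exact hsa.one_sub_nonneg hnorm

end Matrix

namespace QuantumChannel

variable {n ι : Type*} [Fintype ι]

def krausColumns (A : ι → Matrix n n ℂ) : Matrix (n × n) ι ℂ :=
  of fun p k => A k p.1 p.2

theorem krausColumns_mulVec_injective {A : ι → Matrix n n ℂ} (hA : LinearIndependent ℂ A) :
    Injective (krausColumns A).mulVec := by
  intro x y hxy
  refine hA.fintypeLinearCombination_injective (ext fun a b => ?_)
  simpa [krausColumns, mulVec, dotProduct, Fintype.linearCombination_apply, Matrix.sum_apply,
    mul_comm] using congrFun hxy (a, b)

variable [Fintype n]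

def krausMap (A : ι → Matrix n n ℂ) : Matrix ι ι ℂ →ₗ[ℂ] Matrix n n ℂ →ₗ[ℂ] Matrix n n ℂ :=
  LinearMap.mk₂ ℂ (fun c ρ => ∑ i, ∑ j, c i j • (A i * ρ * (A j)ᴴ))
    (fun _ _ _ => by simp only [Matrix.add_apply, add_smul, Finset.sum_add_distrib])
    (fun _ _ _ => by simp only [Matrix.smul_apply, smul_eq_mul, mul_smul, Finset.smul_sum])
    (fun _ _ _ => by
      simp only [Matrix.mul_add, Matrix.add_mul, smul_add, Finset.sum_add_distrib])
    (fun r _ _ => by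
      simp only [Matrix.mul_smul, Matrix.smul_mul, Finset.smul_sum, smul_comm r])

theorem krausMap_apply (A : ι → Matrix n n ℂ) (c : Matrix ι ι ℂ) (ρ : Matrix n n ℂ) :
    krausMap A c ρ = ∑ i, ∑ j, c i j • (A i * ρ * (A j)ᴴ) := rfl

def gramMap (A : ι → Matrix n n ℂ) : Matrix ι ι ℂ →ₗ[ℂ] Matrix n n ℂ where
  toFun c := ∑ i, ∑ j, c i j • ((A j)ᴴ * A i)
  map_add' _ _ := by simp only [Matrix.add_apply, add_smul, Finset.sum_add_distrib]
  map_smul' _ _ := by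
    simp only [Matrix.smul_apply, smul_eq_mul, mul_smul, Finset.smul_sum, RingHom.id_apply]

theorem gramMap_apply (A : ι → Matrix n n ℂ) (c : Matrix ι ι ℂ) :
    gramMap A c = ∑ i, ∑ j, c i j • ((A j)ᴴ * A i) := rfl

variable {A : ι → Matrix n n ℂ}

section DecidableEq

variable [DecidableEq ι]

theorem krausMap_one_apply (ρ : Matrix n n ℂ) :
    krausMap A 1 ρ = ∑ k, A k * ρ * (A k)ᴴ := by
  simp [krausMap_apply, one_apply, ite_smul]

theorem gramMap_one : gramMap A 1 = ∑ k, (A k)ᴴ * A k := by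
  simp [gramMap_apply, one_apply, ite_smul]

end DecidableEq

theorem trace_krausMap (c : Matrix ι ι ℂ) (ρ : Matrix n n ℂ) :
    (krausMap A c ρ).trace = (ρ * gramMap A c).trace := by
  simp only [krausMap_apply, gramMap_apply, trace_sum, Matrix.mul_sum, trace_smul,
    Matrix.mul_smul]
  refine Finset.sum_congr rfl fun i _ => Finset.sum_congr rfl fun j _ => ?_
  rw [trace_mul_cycle, ← Matrix.mul_assoc, trace_mul_comm, Matrix.mul_assoc]

theorem gramMap_conjTranspose (c : Matrix ι ι ℂ) : gramMap A cᴴ = (gramMap A c)ᴴ := by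
  simp only [gramMap_apply, conjTranspose_sum, conjTranspose_smul, conjTranspose_mul,
    conjTranspose_conjTranspose, conjTranspose_apply]
  exact Finset.sum_comm

theorem injective_gramMap_iff :
    Injective (gramMap A) ↔ LinearIndependent ℂ (fun p : ι × ι => (A p.1)ᴴ * A p.2) := by
  have hcomp : ⇑(gramMap A) =
      Fintype.linearCombination ℂ (fun p : ι × ι => (A p.1)ᴴ * A p.2) ∘ fun c p => c p.2 p.1 := by
    ext1 c
    simp only [gramMap_apply, Function.comp_apply, Fintype.linearCombination_apply,
      Fintype.sum_prod_type]
    exact Finset.sum_comm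
  rw [linearIndependent_iff_injective_fintypeLinearCombination, hcomp]
  exact Injective.of_comp_iff' _
    ((Equiv.curry ι ι ℂ).symm.bijective.comp (transposeAddEquiv ι ι ℂ).bijective)

theorem exists_isHermitian_ne_zero_gramMap_eq_zero (h : ¬ Injective (gramMap A)) :
    ∃ e : Matrix ι ι ℂ, e.IsHermitian ∧ e ≠ 0 ∧ gramMap A e = 0 := by
  obtain ⟨c, hc, hc0⟩ : ∃ c, gramMap A c = 0 ∧ c ≠ 0 := by
    simpa [injective_iff_map_eq_zero] using h
  have hstar : gramMap A (star c) = 0 := by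
    rw [star_eq_conjTranspose, gramMap_conjTranspose, hc, conjTranspose_zero]
  have hre : gramMap A (ℜ c) = 0 := by
    rw [realPart_apply_coe, LinearMap.map_smul_of_tower, map_add, hc, hstar, add_zero, smul_zero]
  have him : gramMap A (ℑ c) = 0 := by
    rw [imaginaryPart_apply_coe, map_smul, LinearMap.map_smul_of_tower, map_sub, hc, hstar,
      sub_zero, smul_zero, smul_zero]
  by_cases hr : (ℜ c : Matrix ι ι ℂ) = 0
  · refine ⟨ℑ c, (ℑ c).prop, fun hi => hc0 ?_, him⟩
    rw [← realPart_add_I_smul_imaginaryPart c, hr, hi, smul_zero, add_zero]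
  · exact ⟨ℜ c, (ℜ c).prop, hr, hre⟩

variable [DecidableEq n]

def choiMatrix : (Matrix n n ℂ →ₗ[ℂ] Matrix n n ℂ) →ₗ[ℂ] Matrix (n × n) (n × n) ℂ where
  toFun Ψ := of fun p q => Ψ (single p.2 q.2 1) p.1 q.1
  map_add' _ _ := rfl
  map_smul' _ _ := rfl

variable (n) in
def cptpMaps : Set (Matrix n n ℂ →ₗ[ℂ] Matrix n n ℂ) :=
  {Ψ | (∀ ρ, (Ψ ρ).trace = ρ.trace) ∧ (choiMatrix Ψ).PosSemidef}

theorem choiMatrix_injective : Injective (choiMatrix (n := n)) := by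
  intro Ψ Ψ' h
  refine ext_linearMap ℂ fun i j => LinearMap.ext_ring ?_
  ext a b
  exact congrFun (congrFun h (a, i)) (b, j)

theorem choiMatrix_krausMap (c : Matrix ι ι ℂ) :
    choiMatrix (krausMap A c) = krausColumns A * c * (krausColumns A)ᴴ := by
  ext ⟨a, b⟩ ⟨a', b'⟩
  change krausMap A c (single b b' 1) a a' = _
  simp only [krausMap_apply, Matrix.sum_apply, Matrix.smul_apply, mul_single_mul_apply]
  simp only [mul_apply, krausColumns, of_apply, conjTranspose_apply, Finset.sum_mul, smul_eq_mul,
    mul_one]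
  rw [Finset.sum_comm]
  refine Finset.sum_congr rfl fun i _ => Finset.sum_congr rfl fun j _ => ?_
  ring

theorem krausMap_injective [DecidableEq ι] (hA : LinearIndependent ℂ A) :
    Injective (krausMap A) := by
  obtain ⟨W, hW⟩ := exists_mul_eq_one_of_mulVec_injective (krausColumns_mulVec_injective hA)
  intro c c' h
  refine mul_mul_conjTranspose_left_injective hW ?_
  change krausColumns A * c * (krausColumns A)ᴴ = krausColumns A * c' * (krausColumns A)ᴴ
  rw [← choiMatrix_krausMap, ← choiMatrix_krausMap, h]

theorem krausMap_mem_cptpMaps {c : Matrix ι ι ℂ} (hc : c.PosSemidef) (hgram : gramMap A c = 1) :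
    krausMap A c ∈ cptpMaps n :=
  ⟨fun ρ => by rw [trace_krausMap, hgram, Matrix.mul_one], by
    rw [choiMatrix_krausMap]
    exact hc.mul_mul_conjTranspose_same _⟩

theorem gramMap_eq_one_of_krausMap_mem {c : Matrix ι ι ℂ} (h : krausMap A c ∈ cptpMaps n) :
    gramMap A c = 1 :=
  ext_iff_trace_mul_left.2 fun ρ => by rw [← trace_krausMap, h.1, Matrix.mul_one]

theorem exists_eq_krausMap_of_mem_openSegment [DecidableEq ι] (hA : LinearIndependent ℂ A)
    {c₀ : Matrix ι ι ℂ} {Ψ₁ Ψ₂ : Matrix n n ℂ →ₗ[ℂ] Matrix n n ℂ} (hΨ₁ : Ψ₁ ∈ cptpMaps n)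
    (hΨ₂ : Ψ₂ ∈ cptpMaps n) (h : krausMap A c₀ ∈ openSegment ℝ Ψ₁ Ψ₂) :
    ∃ c, Ψ₁ = krausMap A c := by
  obtain ⟨a, b, ha, hb, -, hsum⟩ := h
  set V := krausColumns A
  have hchoi : a • choiMatrix Ψ₁ + b • choiMatrix Ψ₂ = V * c₀ * Vᴴ := by
    rw [← choiMatrix_krausMap, ← hsum, map_add, LinearMap.map_smul_of_tower,
      LinearMap.map_smul_of_tower]
  have hker : ∀ x, Vᴴ *ᵥ x = 0 → choiMatrix Ψ₁ *ᵥ x = 0 := by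
    intro x hx
    have h0 : (a • choiMatrix Ψ₁ + b • choiMatrix Ψ₂) *ᵥ x = 0 := by
      rw [hchoi, ← mulVec_mulVec, hx, mulVec_zero]
    have := (hΨ₁.2.smul ha.le).mulVec_eq_zero_of_add_mulVec_eq_zero (hΨ₂.2.smul hb.le) h0
    rw [smul_mulVec, smul_eq_zero] at this
    exact this.resolve_left ha.ne'
  obtain ⟨W, hW⟩ := exists_mul_eq_one_of_mulVec_injective (krausColumns_mulVec_injective hA)
  refine ⟨W * choiMatrix Ψ₁ * Wᴴ, choiMatrix_injective ?_⟩
  rw [choiMatrix_krausMap]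
  exact eq_mul_mul_conjTranspose_of_ker_le hW hΨ₁.2.1 hker

theorem krausMap_one_mem_extremePoints [DecidableEq ι] (hA : LinearIndependent ℂ A)
    (hTP : gramMap A 1 = 1) (hgram : Injective (gramMap A)) :
    krausMap A 1 ∈ (cptpMaps n).extremePoints ℝ := by
  refine ⟨krausMap_mem_cptpMaps PosSemidef.one hTP, fun Ψ₁ hΨ₁ Ψ₂ hΨ₂ hseg => ?_⟩
  obtain ⟨c, rfl⟩ := exists_eq_krausMap_of_mem_openSegment hA hΨ₁ hΨ₂ hseg
  rw [hgram ((gramMap_eq_one_of_krausMap_mem hΨ₁).trans hTP.symm)]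

theorem injective_gramMap_of_mem_extremePoints [DecidableEq ι] (hA : LinearIndependent ℂ A)
    (hTP : gramMap A 1 = 1) (hext : krausMap A 1 ∈ (cptpMaps n).extremePoints ℝ) :
    Injective (gramMap A) := by
  by_contra h
  obtain ⟨e, he, he0, hge⟩ := exists_isHermitian_ne_zero_gramMap_eq_zero h
  obtain ⟨ε, hε, hpsd⟩ := he.exists_posSemidef_one_add_smul
  have hmem (t : ℝ) (ht : |t| ≤ ε) : krausMap A (1 + (t : ℂ) • e) ∈ cptpMaps n :=
    krausMap_mem_cptpMaps (hpsd t ht) (by rw [map_add, map_smul, hge, smul_zero, add_zero, hTP])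
  have hseg : krausMap A 1 ∈ openSegment ℝ (krausMap A (1 + (ε : ℂ) • e))
      (krausMap A (1 + ((-ε : ℝ) : ℂ) • e)) := by
    refine ⟨1 / 2, 1 / 2, by norm_num, by norm_num, by norm_num, ?_⟩
    rw [← LinearMap.map_smul_of_tower, ← LinearMap.map_smul_of_tower, ← map_add]
    congr 1
    push_cast
    module
  have hfix :=
    hext.2 (hmem ε (abs_of_pos hε).le) (hmem (-ε) (by rw [abs_neg, abs_of_pos hε])) hseg
  have : (ε : ℂ) • e = 0 := by simpa using krausMap_injective hA hfix
  exact he0 ((smul_eq_zero.1 this).resolve_left (by exact_mod_cast hε.ne'))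

end QuantumChannel

open QuantumChannel in
theorem stmt0_general (d K : ℕ)
    (A : Fin K → Matrix (Fin d) (Fin d) ℂ)
    (hA : LinearIndependent ℂ A)
    (hTP : ∑ k, (A k)ᴴ * (A k) = 1)
    (Φ : Matrix (Fin d) (Fin d) ℂ →ₗ[ℂ] Matrix (Fin d) (Fin d) ℂ)
    (hΦ : ∀ ρ, Φ ρ = ∑ k, (A k) * ρ * (A k)ᴴ) :
    Φ ∈ Set.extremePoints ℝ
      {Ψ : Matrix (Fin d) (Fin d) ℂ →ₗ[ℂ] Matrix (Fin d) (Fin d) ℂ |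
        (∀ ρ, (Ψ ρ).trace = ρ.trace) ∧
        (Matrix.of (fun p q : Fin d × Fin d =>
          (Ψ (Matrix.single p.2 q.2 1)) p.1 q.1)).PosSemidef} ↔
    LinearIndependent ℂ (fun p : Fin K × Fin K => (A p.1)ᴴ * (A p.2)) := by
  obtain rfl : Φ = krausMap A 1 := LinearMap.ext fun ρ => by rw [hΦ, krausMap_one_apply]
  change krausMap A 1 ∈ (cptpMaps (Fin d)).extremePoints ℝ ↔ _
  rw [← gramMap_one] at hTP
  rw [← injective_gramMap_iff]
  exact ⟨injective_gramMap_of_mem_extremePoints hA hTP, krausMap_one_mem_extremePoints hA hTP⟩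

theorem stmt0 (d K : ℕ) (hd : 0 < d) (hK : 0 < K)
    (A : Fin K → Matrix (Fin d) (Fin d) ℂ)
    (hA : LinearIndependent ℂ A)
    (hTP : ∑ k, (A k)ᴴ * (A k) = 1)
    (Φ : Matrix (Fin d) (Fin d) ℂ →ₗ[ℂ] Matrix (Fin d) (Fin d) ℂ)
    (hΦ : ∀ ρ, Φ ρ = ∑ k, (A k) * ρ * (A k)ᴴ) :
    Φ ∈ Set.extremePoints ℝ
      {Ψ : Matrix (Fin d) (Fin d) ℂ →ₗ[ℂ] Matrix (Fin d) (Fin d) ℂ |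
        (∀ ρ, (Ψ ρ).trace = ρ.trace) ∧
        (Matrix.of (fun p q : Fin d × Fin d =>
          (Ψ (Matrix.single p.2 q.2 1)) p.1 q.1)).PosSemidef} ↔
    LinearIndependent ℂ (fun p : Fin K × Fin K => (A p.1)ᴴ * (A p.2)) :=
  stmt0_general d K A hA hTP Φ hΦ
end

section
/- Let G be a group, d K positive natural numbers, D₁ D₂ : G →* Matrix.unitaryGroup (Fin d) ℂ and Ω : G →* Matrix.unitaryGroup (Fin K) ℂ group homomorphisms, and A : Fin K → Matrix (Fin d) (Fin d) ℂ a family satisfying the covariance relation (D₂ g)ᴴ * (A k) * (D₁ g) = ∑_l (Ω g) k l • (A l) for all g ∈ G and all k ∈ Fin K. Let U ∈ Matrix.unitaryGroup (Fin K) ℂ and define Ω' : G →* Matrix.unitaryGroup (Fin K) ℂ by Ω' g = U * (Ω g) * Uᴴ, and define A' : Fin K → Matrix (Fin d) (Fin d) ℂ by A' ℓ = ∑_k U ℓ k • (A k). Then (D₂ g)ᴴ * (A' ℓ) * (D₁ g) = ∑_{ℓ'} (Ω' g) ℓ ℓ' • (A' ℓ') for all g ∈ G and all ℓ ∈ Fin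 K. -/
open Matrix

theorem stmt2 {G : Type*} [Group G] (d K : ℕ) (hd : 0 < d) (hK : 0 < K)
    (D₁ D₂ : G →* Matrix.unitaryGroup (Fin d) ℂ)
    (Ω : G →* Matrix.unitaryGroup (Fin K) ℂ)
    (A : Fin K → Matrix (Fin d) (Fin d) ℂ)
    (hcov : ∀ (g : G) (k : Fin K),
      ((D₂ g : Matrix (Fin d) (Fin d) ℂ))ᴴ * A k * (D₁ g : Matrix (Fin d) (Fin d) ℂ)
        = ∑ l, ((Ω g : Matrix (Fin K) (Fin K) ℂ) k l) • A l)
    (U : Matrix.unitaryGroup (Fin K) ℂ)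
    (Ω' : G → Matrix (Fin K) (Fin K) ℂ)
    (hΩ' : ∀ g, Ω' g = (U : Matrix (Fin K) (Fin K) ℂ) * (Ω g : Matrix (Fin K) (Fin K) ℂ)
        * ((U : Matrix (Fin K) (Fin K) ℂ))ᴴ)
    (A' : Fin K → Matrix (Fin d) (Fin d) ℂ)
    (hA' : ∀ ℓ, A' ℓ = ∑ k, ((U : Matrix (Fin K) (Fin K) ℂ) ℓ k) • A k) :
    ∀ (g : G) (ℓ : Fin K),
      ((D₂ g : Matrix (Fin d) (Fin d) ℂ))ᴴ * A' ℓ * (D₁ g : Matrix (Fin d) (Fin d) ℂ)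
        = ∑ ℓ', (Ω' g ℓ ℓ') • A' ℓ' := by
  intro g ℓ
  have hU : ((U : Matrix (Fin K) (Fin K) ℂ))ᴴ * (U : Matrix (Fin K) (Fin K) ℂ) = 1 := by
    simpa [Matrix.star_eq_conjTranspose] using U.2.1
  calc ((D₂ g : Matrix (Fin d) (Fin d) ℂ))ᴴ * A' ℓ * (D₁ g : Matrix (Fin d) (Fin d) ℂ)
      = ∑ l, ((U : Matrix (Fin K) (Fin K) ℂ) * (Ω g : Matrix (Fin K) (Fin K) ℂ)) ℓ l • A l := by
        rw [hA']
        simp only [Finset.mul_sum, Finset.sum_mul, Matrix.mul_smul, Matrix.smul_mul]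
        simp only [hcov, Finset.smul_sum, smul_smul]
        rw [Finset.sum_comm]
        refine Finset.sum_congr rfl fun l _ => ?_
        rw [← Finset.sum_smul, Matrix.mul_apply]
    _ = ∑ ℓ', (Ω' g ℓ ℓ') • A' ℓ' := by
        simp only [hΩ', hA', Finset.smul_sum]
        rw [Finset.sum_comm]
        refine Finset.sum_congr rfl fun k _ => ?_
        simp only [smul_smul]
        rw [← Finset.sum_smul]
        congr 1
        rw [← Matrix.mul_apply]
        rw [Matrix.mul_assoc (_ * _), hU, Matrix.mul_one]
end

section
/- Let d, K be positive natural numbers, A : Fin K → Matrix (Fin d) (Fin d) ℂ, and let U, V ∈ Matrix.unitaryGroup (Fin d) ℂ and W ∈ Matrix.unitaryGroup (Fin K) ℂ. Define A' : Fin K → Matrix (Fin d) (Fin d) ℂ by A' k = ∑_m (W k m) • (Uᴴ * (A m) * Vᴴ). If the family (fun p : Fin K × Fin K => (A p.1)ᴴ * (A p.2)) is linearly independent over ℂ, then the family (fun p : Fin K × Fin K => (A' p.1)ᴴ * (A' p.2)) is linearly independent over ℂ. -/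
open Matrix

theorem stmt3 (d K : ℕ) (hd : 0 < d) (hK : 0 < K)
    (A : Fin K → Matrix (Fin d) (Fin d) ℂ)
    (U V : Matrix.unitaryGroup (Fin d) ℂ) (W : Matrix.unitaryGroup (Fin K) ℂ)
    (A' : Fin K → Matrix (Fin d) (Fin d) ℂ)
    (hA' : ∀ k, A' k = ∑ m, ((W : Matrix (Fin K) (Fin K) ℂ) k m) •
      (((U : Matrix (Fin d) (Fin d) ℂ))ᴴ * A m * ((V : Matrix (Fin d) (Fin d) ℂ))ᴴ))
    (h : LinearIndependent ℂ (fun p : Fin K × Fin K => (A p.1)ᴴ * (A p.2))) :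
    LinearIndependent ℂ (fun p : Fin K × Fin K => (A' p.1)ᴴ * (A' p.2)) := by
  set Um : Matrix (Fin d) (Fin d) ℂ := (U : Matrix (Fin d) (Fin d) ℂ)
  set Vm : Matrix (Fin d) (Fin d) ℂ := (V : Matrix (Fin d) (Fin d) ℂ)
  set Wm : Matrix (Fin K) (Fin K) ℂ := (W : Matrix (Fin K) (Fin K) ℂ)
  have hUU : Um * Umᴴ = 1 := by
    have := U.prop.2
    simpa [Um, star_eq_conjTranspose] using this
  have hWW : Wm * Wmᴴ = 1 := by
    have := W.prop.2
    simpa [Wm, star_eq_conjTranspose] using this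
  have hVV : Vmᴴ * Vm = 1 := by
    have := V.prop.1
    simpa [Vm, star_eq_conjTranspose] using this
  have key : ∀ k l, (A' k)ᴴ * (A' l) =
      Vm * (∑ q : Fin K × Fin K,
        ((starRingEnd ℂ) (Wm k q.1) * Wm l q.2) • ((A q.1)ᴴ * A q.2)) * Vmᴴ := by
    intro k l
    rw [hA' k, hA' l, conjTranspose_sum, Finset.sum_mul_sum, Fintype.sum_prod_type]
    simp only [Matrix.mul_sum, Matrix.sum_mul]
    apply Finset.sum_congr rfl
    intro m _
    apply Finset.sum_congr rfl
    intro n _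
    simp only [conjTranspose_smul, Matrix.smul_mul, Matrix.mul_smul,
      conjTranspose_mul, conjTranspose_conjTranspose, RingHom.smul_def, smul_smul]
    congr 1
    · simp [Complex.star_def]; ring
    · calc Vm * ((A m)ᴴ * Um) * (Umᴴ * A n * Vmᴴ)
          = Vm * ((A m)ᴴ * (Um * Umᴴ) * A n) * Vmᴴ := by noncomm_ring
        _ = Vm * ((A m)ᴴ * A n) * Vmᴴ := by rw [hUU]; noncomm_ring
        _ = Vm * ((A m)ᴴ * A n) * Vmᴴ := rfl
  rw [Fintype.linearIndependent_iff] at h ⊢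
  intro g hg i
  set c : Fin K × Fin K → ℂ := fun q =>
    ∑ p : Fin K × Fin K, g p * ((starRingEnd ℂ) (Wm p.1 q.1) * Wm p.2 q.2) with hc
  set S : Matrix (Fin d) (Fin d) ℂ := ∑ q : Fin K × Fin K, c q • ((A q.1)ᴴ * A q.2) with hS
  have hsum : S = 0 := by
    have h1 : ∑ p : Fin K × Fin K, g p • ((A' p.1)ᴴ * A' p.2) = Vm * S * Vmᴴ := by
      simp only [key, hS, hc, Finset.sum_smul, Matrix.mul_sum, Matrix.sum_mul,
        Matrix.smul_mul, Matrix.mul_smul, Finset.smul_sum, smul_smul]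
      rw [Finset.sum_comm]
    have h2 : Vm * S * Vmᴴ = 0 := by rw [← h1, hg]
    have h3 : Vmᴴ * (Vm * S * Vmᴴ) * Vm = S := by
      simp only [← Matrix.mul_assoc]
      rw [hVV, Matrix.one_mul, Matrix.mul_assoc, hVV, Matrix.mul_one]
    rw [← h3, h2, Matrix.mul_zero, Matrix.zero_mul]
  have hcz : ∀ q, c q = 0 := h c hsum
  set G : Matrix (Fin K) (Fin K) ℂ := Matrix.of (fun m n => g (m, n)) with hG
  have hM : Wmᴴ * G * Wm = 0 := by
    ext m n
    have hq := hcz (m, n)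
    simp only [hc] at hq
    simp only [Matrix.mul_apply, conjTranspose_apply, Matrix.zero_apply, hG, Matrix.of_apply]
    rw [← hq, Fintype.sum_prod_type, Finset.sum_comm]
    apply Finset.sum_congr rfl
    intro x _
    rw [Finset.sum_mul]
    apply Finset.sum_congr rfl
    intro y _
    simp only [Complex.star_def]
    ring
  have hG0 : G = 0 := by
    have h4 : Wm * (Wmᴴ * G * Wm) * Wmᴴ = G := by
      simp only [← Matrix.mul_assoc]
      rw [hWW, Matrix.one_mul, Matrix.mul_assoc, hWW, Matrix.mul_one]
    rw [hM] at h4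
    simpa using h4.symm
  have h5 : G i.1 i.2 = 0 := by rw [hG0]; simp
  simpa [hG] using h5
end

section
/- Let G be a group, S : Set G a generating set (Subgroup.closure S = ⊤), d K positive natural numbers, D₁ D₂ : G →* Matrix.unitaryGroup (Fin d) ℂ and Ω : G →* Matrix.unitaryGroup (Fin K) ℂ group homomorphisms, and A : Fin K → Matrix (Fin d) (Fin d) ℂ. If for every s ∈ S and every k ∈ Fin K one has (D₂ s)ᴴ * (A k) * (D₁ s) = ∑_l (Ω s) k l • (A l), then for every g ∈ G and every k ∈ Fin K one has (D₂ g)ᴴ * (A k) * (D₁ g) = ∑_l (Ω g) k l • (A l). -/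
/-!
The elements `g` at which `A` is covariant form a subgroup of `G`, so they contain the subgroup
generated by `S`. Closure under products holds because conjugation by `D₁ b`, `D₂ b` acts on each
`A l` separately while `Ω a` only recombines the index `l`, so the two commute and compose to
`Ω (a * b) = Ω a * Ω b`. Closure under inverses follows by undoing the (unitary) conjugation and
using `Ω a⁻¹ * Ω a = 1`.
-/

open Matrix

section Combination

variable {ι α M : Type*} [Fintype ι] [Semiring α] [AddCommMonoid M] [Module α M]

theorem Matrix.sum_apply_smul_sum_apply_smul (P Q : Matrix ι ι α) (A : ι → M) (k : ι) :
    ∑ l, P k l • ∑ m, Q l m • A m = ∑ m, (P * Q) k m • A m := by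
  simp only [Finset.smul_sum, smul_smul, mul_apply, Finset.sum_smul]
  exact Finset.sum_comm

theorem Matrix.sum_one_apply_smul [DecidableEq ι] (A : ι → M) (k : ι) :
    ∑ l, (1 : Matrix ι ι α) k l • A l = A k := by
  simp [one_apply, ite_smul]

end Combination

theorem mul_sum_smul_mul {ι α R : Type*} [Fintype ι] [CommSemiring α] [Semiring R] [Algebra α R]
    (x y : R) (c : ι → α) (A : ι → R) :
    x * (∑ l, c l • A l) * y = ∑ l, c l • (x * A l * y) := by
  simp only [Finset.mul_sum, Finset.sum_mul, mul_smul_comm, smul_mul_assoc]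

theorem Unitary.mul_mul_star_eq_iff {R : Type*} [Monoid R] [StarMul R] (u v : unitary R) (x y : R) :
    (u : R) * x * star (v : R) = y ↔ x = star (u : R) * y * v := by
  constructor
  · rintro rfl
    simp only [← mul_assoc, Unitary.star_mul_self_of_mem u.2, one_mul]
    simp only [mul_assoc, Unitary.star_mul_self_of_mem v.2, mul_one]
  · rintro rfl
    simp only [← mul_assoc, Unitary.mul_star_self_of_mem u.2, one_mul]
    simp only [mul_assoc, Unitary.mul_star_self_of_mem v.2, mul_one]

section Covariance

variable {G ι α R : Type*} [Group G] [Fintype ι] [DecidableEq ι] [CommSemiring α] [Semiring R]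
  [StarMul R] [Algebra α R]

def IsCovariantAt (D₁ D₂ : G →* unitary R) (Ω : G →* Matrix ι ι α) (A : ι → R) (g : G) : Prop :=
  ∀ k, star (D₂ g : R) * A k * D₁ g = ∑ l, Ω g k l • A l

variable {D₁ D₂ : G →* unitary R} {Ω : G →* Matrix ι ι α} {A : ι → R}

theorem isCovariantAt_one : IsCovariantAt D₁ D₂ Ω A 1 := fun k => by
  simp [Matrix.sum_one_apply_smul]

theorem IsCovariantAt.mul {a b : G} (ha : IsCovariantAt D₁ D₂ Ω A a)
    (hb : IsCovariantAt D₁ D₂ Ω A b) : IsCovariantAt D₁ D₂ Ω A (a * b) := fun k =>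
  calc star (D₂ (a * b) : R) * A k * D₁ (a * b)
      = star (D₂ b : R) * (star (D₂ a : R) * A k * D₁ a) * D₁ b := by
        simp only [map_mul, Submonoid.coe_mul, star_mul, mul_assoc]
    _ = ∑ l, Ω a k l • ∑ m, Ω b l m • A m := by
        simp only [ha k, mul_sum_smul_mul, hb _]
    _ = ∑ m, Ω (a * b) k m • A m := by
        rw [Matrix.sum_apply_smul_sum_apply_smul, map_mul]

theorem IsCovariantAt.inv {a : G} (ha : IsCovariantAt D₁ D₂ Ω A a) :
    IsCovariantAt D₁ D₂ Ω A a⁻¹ := fun k => by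
  simp only [map_inv, ← Unitary.star_eq_inv, Unitary.coe_star, star_star]
  rw [Unitary.mul_mul_star_eq_iff]
  calc A k = ∑ m, (Ω a⁻¹ * Ω a) k m • A m := by
        rw [← map_mul, inv_mul_cancel, map_one, Matrix.sum_one_apply_smul]
    _ = ∑ l, Ω a⁻¹ k l • (star (D₂ a : R) * A l * D₁ a) := by
        simp only [ha _, Matrix.sum_apply_smul_sum_apply_smul]
    _ = star (D₂ a : R) * (∑ l, Ω a⁻¹ k l • A l) * D₁ a := (mul_sum_smul_mul _ _ _ _).symm

variable (D₁ D₂ Ω A) in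
def covariantSubgroup : Subgroup G where
  carrier := {g | IsCovariantAt D₁ D₂ Ω A g}
  one_mem' := isCovariantAt_one
  mul_mem' := IsCovariantAt.mul
  inv_mem' := IsCovariantAt.inv

theorem isCovariantAt_of_closure_eq_top {S : Set G} (hS : Subgroup.closure S = ⊤)
    (hcov : ∀ s ∈ S, IsCovariantAt D₁ D₂ Ω A s) (g : G) : IsCovariantAt D₁ D₂ Ω A g :=
  (Subgroup.closure_le (covariantSubgroup D₁ D₂ Ω A)).2 hcov (hS ▸ Subgroup.mem_top g)

end Covariance

theorem stmt5_general {G : Type*} [Group G] (S : Set G) (hS : Subgroup.closure S = ⊤)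
    (d K : ℕ)
    (D₁ D₂ : G →* Matrix.unitaryGroup (Fin d) ℂ)
    (Ω : G →* Matrix.unitaryGroup (Fin K) ℂ)
    (A : Fin K → Matrix (Fin d) (Fin d) ℂ)
    (hcov : ∀ s ∈ S, ∀ k : Fin K,
      ((D₂ s : Matrix (Fin d) (Fin d) ℂ))ᴴ * A k * (D₁ s : Matrix (Fin d) (Fin d) ℂ)
        = ∑ l, ((Ω s : Matrix (Fin K) (Fin K) ℂ) k l) • A l) :
    ∀ (g : G) (k : Fin K),
      ((D₂ g : Matrix (Fin d) (Fin d) ℂ))ᴴ * A k * (D₁ g : Matrix (Fin d) (Fin d) ℂ)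
        = ∑ l, ((Ω g : Matrix (Fin K) (Fin K) ℂ) k l) • A l :=
  isCovariantAt_of_closure_eq_top (Ω := (unitary _).subtype.comp Ω) hS hcov

theorem stmt5 {G : Type*} [Group G] (S : Set G) (hS : Subgroup.closure S = ⊤)
    (d K : ℕ) (hd : 0 < d) (hK : 0 < K)
    (D₁ D₂ : G →* Matrix.unitaryGroup (Fin d) ℂ)
    (Ω : G →* Matrix.unitaryGroup (Fin K) ℂ)
    (A : Fin K → Matrix (Fin d) (Fin d) ℂ)
    (hcov : ∀ s ∈ S, ∀ k : Fin K,
      ((D₂ s : Matrix (Fin d) (Fin d) ℂ))ᴴ * A k * (D₁ s : Matrix (Fin d) (Fin d) ℂ)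
        = ∑ l, ((Ω s : Matrix (Fin K) (Fin K) ℂ) k l) • A l) :
    ∀ (g : G) (k : Fin K),
      ((D₂ g : Matrix (Fin d) (Fin d) ℂ))ᴴ * A k * (D₁ g : Matrix (Fin d) (Fin d) ℂ)
        = ∑ l, ((Ω g : Matrix (Fin K) (Fin K) ℂ) k l) • A l :=
  stmt5_general S hS d K D₁ D₂ Ω A hcov
end

section
/- Let α, β, γ ∈ ℂ satisfy 2 * |β|^2 = 1 and |α|^2 + 2 * |γ|^2 = 1, let φ ∈ ℝ, and define the 3×3 complex matrices A₁ = !![0, α, 0; β, γ, 0; 0, 0, -γ] and A₂ = !![0, 0, α; 0, 0, -γ; β * exp(-2*I*φ), -γ * exp(-2*I*φ), 0]. Then A₁ᴴ * A₁ + A₂ᴴ * A₂ = 1. -/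
open Matrix

/-! Only the modulus of the phase `exp (-2iφ)` enters: since it is `1`, the cross terms
`conj β * γ` of the two Kraus operators cancel and `A₁ᴴA₁ + A₂ᴴA₂` is diagonal with entries
`2‖β‖²` and `‖α‖² + 2‖γ‖²` (twice), which the hypotheses make equal to `1`. -/

def krausA₁ (α β γ : ℂ) : Matrix (Fin 3) (Fin 3) ℂ := !![0, α, 0; β, γ, 0; 0, 0, -γ]

/-- `u` stands for the phase `exp (-2iφ)`. -/
def krausA₂ (α β γ u : ℂ) : Matrix (Fin 3) (Fin 3) ℂ := !![0, 0, α; 0, 0, -γ; β * u, -γ * u, 0]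

theorem conjTranspose_mul_self_add_krausA {α β γ u : ℂ} (hu : ‖u‖ = 1) :
    (krausA₁ α β γ)ᴴ * krausA₁ α β γ + (krausA₂ α β γ u)ᴴ * krausA₂ α β γ u =
      !![2 * (‖β‖ : ℂ) ^ 2, 0, 0;
        0, (‖α‖ : ℂ) ^ 2 + 2 * (‖γ‖ : ℂ) ^ 2, 0;
        0, 0, (‖α‖ : ℂ) ^ 2 + 2 * (‖γ‖ : ℂ) ^ 2] := by
  have hu' : starRingEnd ℂ u * u = 1 := by rw [Complex.conj_mul', hu]; norm_num
  ext i j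
  fin_cases i <;> fin_cases j <;>
    simp [krausA₁, krausA₂, mul_apply, Fin.sum_univ_three, Complex.conj_mul', hu] <;>
    first
    | linear_combination
    | linear_combination -(starRingEnd ℂ β * γ) * hu'
    | linear_combination -(starRingEnd ℂ γ * β) * hu'

theorem stmt7 (α β γ : ℂ) (φ : ℝ)
    (hβ : 2 * ‖β‖ ^ 2 = 1)
    (hαγ : ‖α‖ ^ 2 + 2 * ‖γ‖ ^ 2 = 1)
    (A₁ A₂ : Matrix (Fin 3) (Fin 3) ℂ)
    (hA₁ : A₁ = !![0, α, 0; β, γ, 0; 0, 0, -γ])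
    (hA₂ : A₂ = !![0, 0, α; 0, 0, -γ;
      β * Complex.exp (-2 * Complex.I * φ), -γ * Complex.exp (-2 * Complex.I * φ), 0]) :
    A₁ᴴ * A₁ + A₂ᴴ * A₂ = 1 := by
  have hphase : ‖Complex.exp (-2 * Complex.I * φ)‖ = 1 := by
    simpa [mul_comm, mul_left_comm] using Complex.norm_exp_ofReal_mul_I (-2 * φ)
  have hβ' : 2 * (‖β‖ : ℂ) ^ 2 = 1 := by exact_mod_cast hβ
  have hαγ' : (‖α‖ : ℂ) ^ 2 + 2 * (‖γ‖ : ℂ) ^ 2 = 1 := by exact_mod_cast hαγ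
  rw [hA₁, hA₂, ← krausA₁, ← krausA₂, conjTranspose_mul_self_add_krausA hphase, hβ', hαγ',
    one_fin_three]
end

section
/- Let α, β, γ ∈ ℂ satisfy 2 * |β|^2 = 1, |α|^2 = 1/2 and |γ|^2 = 1/4, and let φ ∈ ℝ. Define the 3×3 complex matrices A₁ = !![0, α, 0; β, γ, 0; 0, 0, -γ] and A₂ = !![0, 0, α; 0, 0, -γ; β * exp(-2*I*φ), -γ * exp(-2*I*φ), 0], and set A 0 = A₁, A 1 = A₂. Then the family (fun p : Fin 2 × Fin 2 => (A p.1)ᴴ * (A p.2)) of 3×3 complex matrices is NOT linearly independent over ℂ. -/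
/-!
The family is dependent for a very simple reason: at this point of the parameter space the two
mixed products are proportional, `A₀ᴴ A₁ = e • (A₁ᴴ A₀)` with the phase `e = exp (-2iφ)`.
Entrywise this needs only `e ē = 1` and `|α|² - |γ|² = |γ|²`, i.e. `|α|² = 2 |γ|²`.
-/

open Matrix

theorem LinearIndependent.ne_smul {ι R M : Type*} [Ring R] [Nontrivial R] [AddCommGroup M]
    [Module R M] {v : ι → M} (hv : LinearIndependent R v) {i j : ι} (hij : i ≠ j) (c : R) :
    v i ≠ c • v j := by
  intro h
  have hpair : LinearIndependent R ![v i, v j] := by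
    convert hv.comp ![i, j] (by simp [Function.Injective, Fin.forall_fin_two, hij, hij.symm])
      using 1
    ext k
    fin_cases k <;> rfl
  exact one_ne_zero (LinearIndependent.pair_iff.mp hpair 1 (-c) (by simp [h])).1

theorem Complex.norm_exp_neg_two_mul_I_mul_ofReal (φ : ℝ) :
    ‖Complex.exp (-2 * Complex.I * φ)‖ = 1 := by
  rw [show -2 * Complex.I * φ = ((-2 * φ : ℝ) : ℂ) * Complex.I by push_cast; ring]
  exact Complex.norm_exp_ofReal_mul_I _

theorem conjTranspose_mul_eq_smul_conjTranspose_mul {α β γ e : ℂ}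
    (hαγ : ‖α‖ ^ 2 = 2 * ‖γ‖ ^ 2) (he : ‖e‖ = 1) :
    (!![0, α, 0; β, γ, 0; 0, 0, -γ])ᴴ * !![0, 0, α; 0, 0, -γ; β * e, -γ * e, 0] =
      e • ((!![0, 0, α; 0, 0, -γ; β * e, -γ * e, 0])ᴴ * !![0, α, 0; β, γ, 0; 0, 0, -γ]) := by
  have hα : starRingEnd ℂ α * α = 2 * (starRingEnd ℂ γ * γ) := by
    rw [Complex.conj_mul', Complex.conj_mul', ← Complex.ofReal_pow, hαγ]
    push_cast
    ring
  have he' : e * starRingEnd ℂ e = 1 := by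
    simp [Complex.mul_conj', he]
  ext i j
  fin_cases i <;> fin_cases j <;> simp [mul_apply, Fin.sum_univ_three]
  · linear_combination -(starRingEnd ℂ β * γ) * he'
  · linear_combination hα - starRingEnd ℂ γ * γ * he'
  · ring
  · linear_combination -e * hα

theorem stmt9_general (α β γ : ℂ) (φ : ℝ)
    (hα : ‖α‖ ^ 2 = 1/2)
    (hγ : ‖γ‖ ^ 2 = 1/4)
    (A : Fin 2 → Matrix (Fin 3) (Fin 3) ℂ)
    (hA0 : A 0 = !![0, α, 0; β, γ, 0; 0, 0, -γ])
    (hA1 : A 1 = !![0, 0, α; 0, 0, -γ;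
      β * Complex.exp (-2 * Complex.I * φ), -γ * Complex.exp (-2 * Complex.I * φ), 0]) :
    ¬ LinearIndependent ℂ (fun p : Fin 2 × Fin 2 => (A p.1)ᴴ * (A p.2)) := by
  intro hind
  have hαγ : ‖α‖ ^ 2 = 2 * ‖γ‖ ^ 2 := by rw [hα, hγ]; norm_num
  refine hind.ne_smul (i := (0, 1)) (j := (1, 0)) (by decide) (Complex.exp (-2 * Complex.I * φ)) ?_
  rw [hA0, hA1]
  exact conjTranspose_mul_eq_smul_conjTranspose_mul hαγ
    (Complex.norm_exp_neg_two_mul_I_mul_ofReal φ)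

theorem stmt9 (α β γ : ℂ) (φ : ℝ)
    (hβ : 2 * ‖β‖ ^ 2 = 1)
    (hα : ‖α‖ ^ 2 = 1/2)
    (hγ : ‖γ‖ ^ 2 = 1/4)
    (A : Fin 2 → Matrix (Fin 3) (Fin 3) ℂ)
    (hA0 : A 0 = !![0, α, 0; β, γ, 0; 0, 0, -γ])
    (hA1 : A 1 = !![0, 0, α; 0, 0, -γ;
      β * Complex.exp (-2 * Complex.I * φ), -γ * Complex.exp (-2 * Complex.I * φ), 0]) :
    ¬ LinearIndependent ℂ (fun p : Fin 2 × Fin 2 => (A p.1)ᴴ * (A p.2)) :=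
  stmt9_general α β γ φ hα hγ A hA0 hA1
end

section
/- Let α, β, γ ∈ ℂ satisfy 2 * |β|^2 = 1 and |α|^2 + 2 * |γ|^2 = 1, with NOT (|α|^2 = 1/2 ∧ |γ|^2 = 1/4), and let φ ∈ ℝ. Define the 3×3 complex matrices A₁ = !![0, α, 0; β, γ, 0; 0, 0, -γ] and A₂ = !![0, 0, α; 0, 0, -γ; β * exp(-2*I*φ), -γ * exp(-2*I*φ), 0], and set A 0 = A₁, A 1 = A₂. Then the family (fun p : Fin 2 × Fin 2 => (A p.1)ᴴ * (A p.2)) of 3×3 complex matrices is linearly independent over ℂ. -/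
/-!
Write `a = ‖α‖²`, `c = ‖γ‖²` and `e = exp (-2iφ)`; of `e` only `e ≠ 0` matters. The products
`A₁ᴴA₁`, `A₂ᴴA₂` are supported on the upper-left `2 × 2` block and the last diagonal entry,
while `A₁ᴴA₂`, `A₂ᴴA₁` are supported on the complementary entries, so a vanishing linear
combination splits into two `2 × 2` linear systems for the coefficients, read off from suitable
entries. For `γ ≠ 0` their determinants are `β̄γ‖e‖²(a + 2c)` and `β̄γē(a - 2c)`; for `γ = 0`
they are `-a‖β‖²‖e‖²` and `a²`. Hence only `a = 2c` can spoil independence, and together with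
`a + 2c = 1` this is the excluded point `a = 1/2`, `c = 1/4`.
-/

open Matrix ComplexConjugate

theorem eq_zero_and_eq_zero_of_det_ne_zero {R : Type*} [CommRing R] [NoZeroDivisors R]
    {a b c d x y : R} (hdet : a * d - b * c ≠ 0)
    (h₁ : x * a + y * b = 0) (h₂ : x * c + y * d = 0) : x = 0 ∧ y = 0 := by
  have hx : x * (a * d - b * c) = 0 := by linear_combination d * h₁ - b * h₂
  have hy : y * (a * d - b * c) = 0 := by linear_combination a * h₂ - c * h₁
  exact ⟨(mul_eq_zero.1 hx).resolve_right hdet, (mul_eq_zero.1 hy).resolve_right hdet⟩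

section QutritKraus

variable (α β γ e : ℂ)

def qutritKraus₁ : Matrix (Fin 3) (Fin 3) ℂ := !![0, α, 0; β, γ, 0; 0, 0, -γ]

def qutritKraus₂ : Matrix (Fin 3) (Fin 3) ℂ := !![0, 0, α; 0, 0, -γ; β * e, -γ * e, 0]

def qutritKraus : Fin 2 → Matrix (Fin 3) (Fin 3) ℂ := ![qutritKraus₁ α β γ, qutritKraus₂ α β γ e]

theorem conjTranspose_qutritKraus₁_mul_qutritKraus₁ :
    (qutritKraus₁ α β γ)ᴴ * qutritKraus₁ α β γ =
      !![(‖β‖ : ℂ) ^ 2, conj β * γ, 0;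
        conj γ * β, (‖α‖ : ℂ) ^ 2 + (‖γ‖ : ℂ) ^ 2, 0;
        0, 0, (‖γ‖ : ℂ) ^ 2] := by
  ext i j
  fin_cases i <;> fin_cases j <;>
    simp [qutritKraus₁, mul_apply, Fin.sum_univ_three, Complex.conj_mul']

theorem conjTranspose_qutritKraus₂_mul_qutritKraus₂ :
    (qutritKraus₂ α β γ e)ᴴ * qutritKraus₂ α β γ e =
      !![(‖β‖ : ℂ) ^ 2 * (‖e‖ : ℂ) ^ 2, -conj β * γ * (‖e‖ : ℂ) ^ 2, 0;
        -conj γ * β * (‖e‖ : ℂ) ^ 2, (‖γ‖ : ℂ) ^ 2 * (‖e‖ : ℂ) ^ 2, 0;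
        0, 0, (‖α‖ : ℂ) ^ 2 + (‖γ‖ : ℂ) ^ 2] := by
  ext i j
  fin_cases i <;> fin_cases j <;>
    simp [qutritKraus₂, mul_apply, Fin.sum_univ_three, ← Complex.conj_mul'] <;> ring

theorem conjTranspose_qutritKraus₁_mul_qutritKraus₂ :
    (qutritKraus₁ α β γ)ᴴ * qutritKraus₂ α β γ e =
      !![0, 0, -conj β * γ;
        0, 0, (‖α‖ : ℂ) ^ 2 - (‖γ‖ : ℂ) ^ 2;
        -conj γ * β * e, (‖γ‖ : ℂ) ^ 2 * e, 0] := by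
  ext i j
  fin_cases i <;> fin_cases j <;>
    simp [qutritKraus₁, qutritKraus₂, mul_apply, Fin.sum_univ_three, ← Complex.conj_mul'] <;> ring

theorem conjTranspose_qutritKraus₂_mul_qutritKraus₁ :
    (qutritKraus₂ α β γ e)ᴴ * qutritKraus₁ α β γ =
      !![0, 0, -conj β * γ * conj e;
        0, 0, (‖γ‖ : ℂ) ^ 2 * conj e;
        -conj γ * β, (‖α‖ : ℂ) ^ 2 - (‖γ‖ : ℂ) ^ 2, 0] := by
  ext i j
  fin_cases i <;> fin_cases j <;>
    simp [qutritKraus₁, qutritKraus₂, mul_apply, Fin.sum_univ_three, ← Complex.conj_mul'] <;> ring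

theorem sum_smul_conjTranspose_qutritKraus_mul (g : Fin 2 × Fin 2 → ℂ) :
    ∑ p, g p • ((qutritKraus α β γ e p.1)ᴴ * qutritKraus α β γ e p.2) =
      !![g (0, 0) * (‖β‖ : ℂ) ^ 2 + g (1, 1) * ((‖β‖ : ℂ) ^ 2 * (‖e‖ : ℂ) ^ 2),
          g (0, 0) * (conj β * γ) + g (1, 1) * -(conj β * γ * (‖e‖ : ℂ) ^ 2),
          g (0, 1) * -(conj β * γ) + g (1, 0) * -(conj β * γ * conj e);
        g (0, 0) * (conj γ * β) + g (1, 1) * -(conj γ * β * (‖e‖ : ℂ) ^ 2),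
          g (0, 0) * ((‖α‖ : ℂ) ^ 2 + (‖γ‖ : ℂ) ^ 2) + g (1, 1) * ((‖γ‖ : ℂ) ^ 2 * (‖e‖ : ℂ) ^ 2),
          g (0, 1) * ((‖α‖ : ℂ) ^ 2 - (‖γ‖ : ℂ) ^ 2) + g (1, 0) * ((‖γ‖ : ℂ) ^ 2 * conj e);
        g (0, 1) * -(conj γ * β * e) + g (1, 0) * -(conj γ * β),
          g (0, 1) * ((‖γ‖ : ℂ) ^ 2 * e) + g (1, 0) * ((‖α‖ : ℂ) ^ 2 - (‖γ‖ : ℂ) ^ 2),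
          g (0, 0) * (‖γ‖ : ℂ) ^ 2 + g (1, 1) * ((‖α‖ : ℂ) ^ 2 + (‖γ‖ : ℂ) ^ 2)] := by
  simp only [Fintype.sum_prod_type, Fin.sum_univ_two, qutritKraus, cons_val_zero, cons_val_one,
    conjTranspose_qutritKraus₁_mul_qutritKraus₁, conjTranspose_qutritKraus₁_mul_qutritKraus₂,
    conjTranspose_qutritKraus₂_mul_qutritKraus₁, conjTranspose_qutritKraus₂_mul_qutritKraus₂]
  ext i j
  fin_cases i <;> fin_cases j <;> simp

variable {α β γ e}

theorem linearIndependent_conjTranspose_qutritKraus_mul (hβ : β ≠ 0) (he : e ≠ 0)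
    (hαγ : ‖α‖ ^ 2 ≠ 2 * ‖γ‖ ^ 2) :
    LinearIndependent ℂ
      (fun p : Fin 2 × Fin 2 => (qutritKraus α β γ e p.1)ᴴ * qutritKraus α β γ e p.2) := by
  rw [Fintype.linearIndependent_iff]
  intro g hg
  rw [sum_smul_conjTranspose_qutritKraus_mul] at hg
  have hg00 := congrFun₂ hg 0 0
  have hg01 := congrFun₂ hg 0 1
  have hg02 := congrFun₂ hg 0 2
  have hg11 := congrFun₂ hg 1 1
  have hg12 := congrFun₂ hg 1 2
  have hg21 := congrFun₂ hg 2 1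
  have hs : (‖e‖ : ℂ) ^ 2 ≠ 0 := by simpa using he
  have hsub : (‖α‖ : ℂ) ^ 2 - 2 * (‖γ‖ : ℂ) ^ 2 ≠ 0 := by exact_mod_cast sub_ne_zero.2 hαγ
  suffices g (0, 0) = 0 ∧ g (1, 1) = 0 ∧ g (0, 1) = 0 ∧ g (1, 0) = 0 by
    obtain ⟨h00, h11, h01, h10⟩ := this
    rintro ⟨i, j⟩
    fin_cases i <;> fin_cases j <;> assumption
  rcases eq_or_ne γ 0 with rfl | hγ
  · simp only [norm_zero, Complex.ofReal_zero] at hg11 hg12 hg21 hsub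
    have ha : (‖α‖ : ℂ) ^ 2 ≠ 0 := by simpa using hsub
    have hb : (‖β‖ : ℂ) ^ 2 ≠ 0 := by simpa using hβ
    obtain ⟨h00, h11⟩ := eq_zero_and_eq_zero_of_det_ne_zero
      (by intro h; apply mul_ne_zero (mul_ne_zero ha hb) hs; linear_combination -h) hg00 hg11
    obtain ⟨h01, h10⟩ := eq_zero_and_eq_zero_of_det_ne_zero
      (by intro h; apply mul_ne_zero ha ha; linear_combination h) hg12 hg21
    exact ⟨h00, h11, h01, h10⟩
  · have hx : conj β * γ ≠ 0 := mul_ne_zero ((map_ne_zero (starRingEnd ℂ)).2 hβ) hγ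
    have he' : conj e ≠ 0 := (map_ne_zero (starRingEnd ℂ)).2 he
    have hadd : (‖α‖ : ℂ) ^ 2 + 2 * (‖γ‖ : ℂ) ^ 2 ≠ 0 := by
      have : 0 < ‖α‖ ^ 2 + 2 * ‖γ‖ ^ 2 := by positivity
      exact_mod_cast this.ne'
    obtain ⟨h00, h11⟩ := eq_zero_and_eq_zero_of_det_ne_zero
      (by intro h; apply mul_ne_zero (mul_ne_zero hx hs) hadd; linear_combination h) hg01 hg11
    obtain ⟨h01, h10⟩ := eq_zero_and_eq_zero_of_det_ne_zero
      (by intro h; apply mul_ne_zero (mul_ne_zero hx he') hsub; linear_combination h) hg02 hg12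
    exact ⟨h00, h11, h01, h10⟩

end QutritKraus

theorem stmt10 (α β γ : ℂ) (φ : ℝ)
    (hβ : 2 * ‖β‖ ^ 2 = 1)
    (hαγ : ‖α‖ ^ 2 + 2 * ‖γ‖ ^ 2 = 1)
    (hne : ¬ (‖α‖ ^ 2 = 1/2 ∧ ‖γ‖ ^ 2 = 1/4))
    (A : Fin 2 → Matrix (Fin 3) (Fin 3) ℂ)
    (hA0 : A 0 = !![0, α, 0; β, γ, 0; 0, 0, -γ])
    (hA1 : A 1 = !![0, 0, α; 0, 0, -γ;
      β * Complex.exp (-2 * Complex.I * φ), -γ * Complex.exp (-2 * Complex.I * φ), 0]) :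
    LinearIndependent ℂ (fun p : Fin 2 × Fin 2 => (A p.1)ᴴ * (A p.2)) := by
  have hA : A = qutritKraus α β γ (Complex.exp (-2 * Complex.I * φ)) := by
    funext i
    fin_cases i
    exacts [hA0, hA1]
  subst hA
  refine linearIndependent_conjTranspose_qutritKraus_mul ?_ (Complex.exp_ne_zero _) ?_
  · rintro rfl
    norm_num at hβ
  · intro h
    exact hne ⟨by linarith, by linarith⟩
end

section
/- Let ω = exp(2 * π * I / 3) ∈ ℂ and define A : Fin 3 → Matrix (Fin 3) (Fin 3) ℂ by A 0 = (1/√2) • diagonal ![0, 1, -1], A 1 = (1/√2) • !![0, -1, 0; 0, 0, 0; ω, 0, 0], A 2 = (1/√2) • !![0, 0, 1; -ω, 0, 0; 0, 0, 0]. Then the family (fun p : Fin 3 × Fin 3 => (A p.1)ᴴ * (A p.2)) of 3×3 complex matrices is linearly independent over ℂ. -/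
/-!
Pulling the common factor `1 / √2` out of the Kraus operators rescales every product `A_kᴴ A_l` by
the same nonzero number `1 / 2`, so it suffices to treat the unnormalised operators. For those, the
six products with `k ≠ l` are nonzero multiples of six distinct off-diagonal matrix units, and the
three with `k = l` are `diag(0,1,1)`, `diag(|ω|²,1,0)` and `diag(|ω|²,0,1)`, which are independent
because their coefficient determinant is `-2|ω|² ≠ 0`.
-/

open Matrix

theorem Matrix.conjTranspose_smul_mul_smul {n α : Type*} [Fintype n] [CommRing α] [StarRing α]
    (c : α) (M N : Matrix n n α) : (c • M)ᴴ * (c • N) = (star c * c) • (Mᴴ * N) := by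
  rw [conjTranspose_smul, smul_mul, Matrix.mul_smul, smul_smul]

theorem LinearIndependent.const_smul {ι K V : Type*} [Field K] [AddCommGroup V] [Module K V]
    {v : ι → V} (hv : LinearIndependent K v) {c : K} (hc : c ≠ 0) :
    LinearIndependent K (fun i => c • v i) :=
  hv.units_smul fun _ => Units.mk0 c hc

/-- The Kraus operators of Eq. (56) without their normalisation factor `1 / √2`. -/
def a4Kraus (ω : ℂ) : Fin 3 → Matrix (Fin 3) (Fin 3) ℂ :=
  ![diagonal ![0, 1, -1], !![0, -1, 0; 0, 0, 0; ω, 0, 0], !![0, 0, 1; -ω, 0, 0; 0, 0, 0]]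

theorem linearIndependent_conjTranspose_a4Kraus_mul {ω : ℂ} (hω : ω ≠ 0) :
    LinearIndependent ℂ (fun p : Fin 3 × Fin 3 => (a4Kraus ω p.1)ᴴ * a4Kraus ω p.2) := by
  rw [Fintype.linearIndependent_iff]
  intro g hg
  have entry (i j : Fin 3) := congrFun (congrFun hg i) j
  have e00 := entry 0 0; have e01 := entry 0 1; have e02 := entry 0 2
  have e10 := entry 1 0; have e11 := entry 1 1; have e12 := entry 1 2
  have e20 := entry 2 0; have e21 := entry 2 1; have e22 := entry 2 2
  simp only [a4Kraus, diagonal, Fin.isValue, Fintype.sum_prod_type, Fin.sum_univ_three,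
    cons_val_zero, cons_val_one, cons_val, Matrix.add_apply, Matrix.smul_apply, mul_apply,
    conjTranspose_apply, of_apply, RCLike.star_def, mul_ite, mul_zero, Finset.sum_ite_eq',
    Finset.mem_univ, ↓reduceIte, map_zero, smul_eq_mul, cons_val', cons_val_fin_one, one_ne_zero,
    add_zero, Fin.reduceEq, zero_mul, mul_neg, neg_zero, zero_add, map_neg, neg_mul, neg_neg,
    Matrix.zero_apply, mul_one, neg_eq_zero, mul_eq_zero, map_eq_zero, hω, or_false, zero_ne_one,
    map_one, one_mul] at e00 e01 e02 e10 e11 e12 e20 e21 e22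
  have hnormSq : (starRingEnd ℂ) ω * ω ≠ 0 := mul_ne_zero ((map_ne_zero _).2 hω) hω
  have hsum : g (1, 1) + g (2, 2) = 0 :=
    (mul_eq_zero.1 (by linear_combination e00)).resolve_right hnormSq
  have g00 : g (0, 0) = 0 := by linear_combination (e11 + e22 - hsum) / 2
  have g11 : g (1, 1) = 0 := by linear_combination (e11 - e22 + hsum) / 2
  have g22 : g (2, 2) = 0 := by linear_combination (e22 - e11 + hsum) / 2
  intro p
  fin_cases p <;> assumption

theorem stmt12 (ω : ℂ) (hω : ω = Complex.exp (2 * Real.pi * Complex.I / 3))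
    (A : Fin 3 → Matrix (Fin 3) (Fin 3) ℂ)
    (hA0 : A 0 = (1 / (Real.sqrt 2 : ℂ)) • Matrix.diagonal ![0, 1, -1])
    (hA1 : A 1 = (1 / (Real.sqrt 2 : ℂ)) • !![0, -1, 0; 0, 0, 0; ω, 0, 0])
    (hA2 : A 2 = (1 / (Real.sqrt 2 : ℂ)) • !![0, 0, 1; -ω, 0, 0; 0, 0, 0]) :
    LinearIndependent ℂ (fun p : Fin 3 × Fin 3 => (A p.1)ᴴ * (A p.2)) := by
  have hA : A = fun k => (1 / (Real.sqrt 2 : ℂ)) • a4Kraus ω k := by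
    funext k
    fin_cases k <;> simp [a4Kraus, hA0, hA1, hA2]
  have hscale : (1 / (Real.sqrt 2 : ℂ)) ≠ 0 := by simp
  subst hA
  simp only [conjTranspose_smul_mul_smul]
  exact (linearIndependent_conjTranspose_a4Kraus_mul (hω ▸ Complex.exp_ne_zero _)).const_smul
    (mul_ne_zero (star_ne_zero.2 hscale) hscale)
end

section
/- Define A : Fin 2 → Matrix (Fin 3) (Fin 3) ℂ by A 0 = (1/√2) • !![0, √2, 0; 1, 0, 0; 0, 0, 0] and A 1 = (1/√2) • !![0, 0, √2; 0, 0, 0; 1, 0, 0]. Then the family (fun p : Fin 2 × Fin 2 => (A p.1)ᴴ * (A p.2)) of 3×3 complex matrices is linearly independent over ℂ. -/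
open Matrix

theorem stmt14 (A : Fin 2 → Matrix (Fin 3) (Fin 3) ℂ)
    (hA0 : A 0 = (1 / (Real.sqrt 2 : ℂ)) • !![0, (Real.sqrt 2 : ℂ), 0; 1, 0, 0; 0, 0, 0])
    (hA1 : A 1 = (1 / (Real.sqrt 2 : ℂ)) • !![0, 0, (Real.sqrt 2 : ℂ); 0, 0, 0; 1, 0, 0]) :
    LinearIndependent ℂ (fun p : Fin 2 × Fin 2 => (A p.1)ᴴ * (A p.2)) := by
  have hne : (Real.sqrt 2 : ℂ) ≠ 0 := by
    exact Complex.ofReal_ne_zero.mpr (ne_of_gt (Real.sqrt_pos.mpr (by norm_num)))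
  have h2 : (Real.sqrt 2 : ℂ) * (Real.sqrt 2 : ℂ) = 2 := by
    rw [← Complex.ofReal_mul, Real.mul_self_sqrt (by norm_num)]; norm_num
  have hinv : ((Real.sqrt 2 : ℂ))⁻¹ * ((Real.sqrt 2 : ℂ))⁻¹ = 1/2 := by
    rw [← mul_inv, h2]; norm_num
  have hid : ((Real.sqrt 2 : ℂ))⁻¹ * (Real.sqrt 2 : ℂ) = 1 := inv_mul_cancel₀ hne
  set P : Fin 2 × Fin 2 → Matrix (Fin 3) (Fin 3) ℂ := fun p =>
    ![![!![(1:ℂ)/2,0,0;0,1,0;0,0,0], !![0,0,0;0,0,1;0,0,0]],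
      ![!![0,0,0;0,0,0;0,1,0], !![(1:ℂ)/2,0,0;0,0,0;0,0,1]]] p.1 p.2 with hPdef
  have hfun : (fun p : Fin 2 × Fin 2 => (A p.1)ᴴ * (A p.2)) = P := by
    funext p
    obtain ⟨i, j⟩ := p
    fin_cases i <;> fin_cases j <;>
      · ext a b
        fin_cases a <;> fin_cases b <;>
          simp [hA0, hA1, hPdef, Matrix.mul_apply, Fin.sum_univ_three,
            conjTranspose_apply, Complex.conj_ofReal, hinv, hid, h2, mul_comm, Matrix.vecHead, Matrix.vecTail]
  rw [hfun, Fintype.linearIndependent_iff]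
  intro g hg
  have e := fun i j => congrFun (congrFun hg i) j
  have ea := e 0 0
  have eb := e 1 1
  have ec := e 1 2
  have ed := e 2 1
  have ee := e 2 2
  simp [Fintype.sum_prod_type, Fin.sum_univ_succ, hPdef] at ea eb ec ed ee
  intro p
  obtain ⟨i, j⟩ := p
  fin_cases i <;> fin_cases j <;> simp_all
end

section
/- Let a ∈ ℂ with a ≠ 0, and define A : Fin 3 → Matrix (Fin 3) (Fin 3) ℂ by A 0 = !![0, -a, 0; 0, 0, -a; 0, 0, 0], A 1 = diagonal ![a, 0, -a], and A 2 = -(A 0)ᴴ. Then the family (fun p : Fin 3 × Fin 3 => (A p.1)ᴴ * (A p.2)) of 3×3 complex matrices is linearly independent over ℂ. -/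
open Matrix

theorem stmt16 (a : ℂ) (ha : a ≠ 0)
    (A : Fin 3 → Matrix (Fin 3) (Fin 3) ℂ)
    (hA0 : A 0 = !![0, -a, 0; 0, 0, -a; 0, 0, 0])
    (hA1 : A 1 = Matrix.diagonal ![a, 0, -a])
    (hA2 : A 2 = -(A 0)ᴴ) :
    LinearIndependent ℂ (fun p : Fin 3 × Fin 3 => (A p.1)ᴴ * (A p.2)) := by
  rw [hA0] at hA2
  rw [Fintype.linearIndependent_iff]
  intro g hg
  have h : ∀ i j : Fin 3, (∑ p : Fin 3 × Fin 3, g p • ((A p.1)ᴴ * (A p.2))) i j = 0 := by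
    intro i j; rw [hg]; rfl
  simp only [Fintype.sum_prod_type, Finset.sum_apply, Fin.sum_univ_three, hA0, hA1, hA2,
    Matrix.add_apply, Matrix.smul_apply, Matrix.mul_apply, Matrix.conjTranspose_apply,
    Matrix.neg_apply, Matrix.diagonal_apply, smul_eq_mul] at h
  have h00 := h 0 0
  have h10 := h 1 0
  have h20 := h 2 0
  have h01 := h 0 1
  have h11 := h 1 1
  have h21 := h 2 1
  have h02 := h 0 2
  have h12 := h 1 2
  have h22 := h 2 2
  simp [Matrix.vecHead, Matrix.vecTail, Fin.isValue] at h00 h10 h20 h01 h11 h21 h02 h12 h22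
  have hb : (starRingEnd ℂ) a ≠ 0 := by simpa using ha
  have hr : (starRingEnd ℂ) a * a ≠ 0 := mul_ne_zero hb ha
  have e1 : (g 1 + g (2,2)) * ((starRingEnd ℂ) a * a) = 0 := by linear_combination h00
  have e2 : (g 0 + g (2,2)) * ((starRingEnd ℂ) a * a) = 0 := by linear_combination h11
  have e3 : (g 0 + g 1) * ((starRingEnd ℂ) a * a) = 0 := by linear_combination h22
  replace e1 := (mul_eq_zero.mp e1).resolve_right hr
  replace e2 := (mul_eq_zero.mp e2).resolve_right hr
  replace e3 := (mul_eq_zero.mp e3).resolve_right hr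
  have g0 : g 0 = 0 := by linear_combination (e2 + e3 - e1)/2
  have g1 : g 1 = 0 := by linear_combination (e1 + e3 - e2)/2
  have g2 : g (2,2) = 0 := by linear_combination (e1 + e2 - e3)/2
  intro p
  fin_cases p
  exacts [g0, h10.resolve_right ha, h20.resolve_right ha, h01.resolve_right ha, g1,
    h21.resolve_right ha, h02.resolve_right ha, h12.resolve_right ha, g2]
end
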